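/- There exist ℂ-linear isomorphisms intertwining the S- and T-actions between the paired subspaces of P₂: the linear map V₀⁺ → V₂⁺ sending x₀²+x₃² ↦ x₂x₄+x₅x₁, x₁²+x₄² ↦ x₃x₅+x₀x₂, x₂²+x₅² ↦ x₄x₀+x₁x₃ commutes with S and with T; the linear map V₀⁻ → V₂⁻ sending x₀²−x₃² ↦ x₂x₄−x₅x₁, x₁²−x₄² ↦ x₃x₅−x₀x₂, x₂²−x₅² ↦ x₄x₀−x₁x₃ commutes with S and with T; and the linear map V₁⁺ → V₃ sending x₀x₁+x₃x₄ ↦ x₂x₅, x₁x₂+x₄x₅ ↦ x₃x₀, x₂x₃+x₅x₀ ↦ x₄x₁ commutes with S and with T. -/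

import Mathlib

open MvPolynomial

noncomputable section

abbrev R6 : Type := MvPolynomial (Fin 6) ℂ

/-- `ε = exp(2πi/6)`, a primitive 6th root of unity. -/
def ε : ℂ := Complex.exp (2 * Real.pi * Complex.I / 6)

/-- The Heisenberg generator `S`, the `ℂ`-algebra map with `S xᵢ = x_{i+1 mod 6}`. -/
def Sh : R6 →ₐ[ℂ] R6 := aeval fun i : Fin 6 => X (i + 1)

/-- The Heisenberg generator `T`, the `ℂ`-algebra map with `T xᵢ = εⁱ xᵢ`. -/
def Tw : R6 →ₐ[ℂ] R6 := aeval fun i : Fin 6 => C (ε ^ (i : ℕ)) * X i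

def V0p : Submodule ℂ R6 :=
  Submodule.span ℂ {X 0 ^ 2 + X 3 ^ 2, X 1 ^ 2 + X 4 ^ 2, X 2 ^ 2 + X 5 ^ 2}
def V0m : Submodule ℂ R6 :=
  Submodule.span ℂ {X 0 ^ 2 - X 3 ^ 2, X 1 ^ 2 - X 4 ^ 2, X 2 ^ 2 - X 5 ^ 2}
def V1p : Submodule ℂ R6 :=
  Submodule.span ℂ {X 0 * X 1 + X 3 * X 4, X 1 * X 2 + X 4 * X 5, X 2 * X 3 + X 5 * X 0}
def V2p : Submodule ℂ R6 :=
  Submodule.span ℂ {X 0 * X 2 + X 3 * X 5, X 1 * X 3 + X 4 * X 0, X 2 * X 4 + X 5 * X 1}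
def V2m : Submodule ℂ R6 :=
  Submodule.span ℂ {X 0 * X 2 - X 3 * X 5, X 1 * X 3 - X 4 * X 0, X 2 * X 4 - X 5 * X 1}
def V3 : Submodule ℂ R6 :=
  Submodule.span ℂ {X 0 * X 3, X 1 * X 4, X 2 * X 5}

/-- A linear map `φ` realizes a `ℂ`-linear isomorphism from `V` onto `W`, intertwining the
`S`- and `T`-actions. -/
def IsEquivariantIso (φ : R6 →ₗ[ℂ] R6) (V W : Submodule ℂ R6) : Prop :=
  Submodule.map φ V = W ∧ (∀ v ∈ V, φ v = 0 → v = 0) ∧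
    (∀ v ∈ V, φ (Sh v) = Sh (φ v)) ∧ (∀ v ∈ V, φ (Tw v) = Tw (φ v))

/-!
All three maps are restrictions of second-order differential operators of the form
`∑ᵢ x_{i+a} x_{i+b} ∂_{i+c} ∂_{i+d}` (indices mod 6). Such a cyclic sum commutes with `S` on the
whole ring, and it commutes with `T` as soon as `a + b ≡ c + d (mod 6)`, because `T` scales a
monomial by `ε` to the power of its index sum. For the required maps
`x₀² ↦ x₂x₄` and `x₀x₁ ↦ x₂x₅` this holds (`2 + 4 ≡ 0 + 0`, `2 + 5 ≡ 1 + 0`), and on each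
subspace another such operator is a left inverse, which gives injectivity.
-/

lemma Submodule.span_insert_neg {R M : Type*} [Ring R] [AddCommGroup M] [Module R M] (x : M)
    (s : Set M) : span R (insert (-x) s) = span R (insert x s) := by
  rw [span_insert, span_insert, ← Set.neg_singleton, span_neg]

lemma ε_pow_six : ε ^ 6 = 1 := by
  rw [ε, ← Complex.exp_nat_mul, ← Complex.exp_two_pi_mul_I]
  congr 1
  push_cast
  ring

lemma ε_pow_val_add (a b : Fin 6) : ε ^ ((a + b : Fin 6) : ℕ) = ε ^ (a : ℕ) * ε ^ (b : ℕ) := by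
  rw [Fin.val_add, ← pow_eq_pow_mod _ ε_pow_six, pow_add]

lemma Sh_eq_rename : Sh = rename (· + 1) := by
  ext
  simp [Sh]

lemma Tw_X (i : Fin 6) : Tw (X i) = ε ^ (i : ℕ) • X i := by
  simp [Tw, smul_eq_C_mul]

lemma pderiv_Tw (j : Fin 6) (p : R6) : pderiv j (Tw p) = ε ^ (j : ℕ) • Tw (pderiv j p) := by
  induction p using MvPolynomial.induction_on with
  | C a => simp [Tw]
  | add p q hp hq => simp [hp, hq]
  | mul_X p i hp =>
    simp only [map_mul, Derivation.leibniz, smul_eq_mul, hp, Tw_X, Derivation.map_smul, map_add,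
      pderiv_X]
    rcases eq_or_ne i j with rfl | h
    · simp [smul_smul, mul_comm]
    · simp [h]

def cyclicDiffOp (a b c d : Fin 6) : R6 →ₗ[ℂ] R6 :=
  ∑ i : Fin 6, LinearMap.mulLeft ℂ (X (i + a) * X (i + b)) ∘ₗ
    (pderiv (i + c)).toLinearMap ∘ₗ (pderiv (i + d)).toLinearMap

lemma cyclicDiffOp_apply (a b c d : Fin 6) (p : R6) :
    cyclicDiffOp a b c d p =
      ∑ i : Fin 6, X (i + a) * X (i + b) * pderiv (i + c) (pderiv (i + d) p) := by
  simp [cyclicDiffOp, mul_assoc]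

lemma cyclicDiffOp_Sh (a b c d : Fin 6) (p : R6) :
    cyclicDiffOp a b c d (Sh p) = Sh (cyclicDiffOp a b c d p) := by
  have hinj : Function.Injective (· + 1 : Fin 6 → Fin 6) := add_left_injective 1
  simp only [cyclicDiffOp_apply, map_sum, map_mul, Sh_eq_rename, rename_X]
  rw [← Fintype.sum_equiv (Equiv.addRight 1) _ _ fun _ => rfl]
  refine Finset.sum_congr rfl fun i _ => ?_
  simp only [Equiv.coe_addRight, add_right_comm i 1]
  rw [pderiv_rename hinj, pderiv_rename hinj]

lemma cyclicDiffOp_Tw {a b c d : Fin 6} (h : a + b = c + d) (p : R6) :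
    cyclicDiffOp a b c d (Tw p) = Tw (cyclicDiffOp a b c d p) := by
  have weight (i : Fin 6) : ε ^ ((i + d : Fin 6) : ℕ) * ε ^ ((i + c : Fin 6) : ℕ) =
      ε ^ ((i + a : Fin 6) : ℕ) * ε ^ ((i + b : Fin 6) : ℕ) := by
    rw [← ε_pow_val_add, ← ε_pow_val_add, add_add_add_comm, add_comm d, ← h, add_add_add_comm]
  simp only [cyclicDiffOp_apply, map_sum, map_mul, pderiv_Tw, Derivation.map_smul, Tw_X]
  refine Finset.sum_congr rfl fun i _ => ?_
  rw [smul_mul_smul_comm, ← weight, smul_mul_assoc, mul_smul_comm, mul_smul_comm, smul_smul]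

lemma isEquivariantIso_span_image {φ ψ : R6 →ₗ[ℂ] R6} {s : Set R6}
    (hS : ∀ p, φ (Sh p) = Sh (φ p)) (hT : ∀ p, φ (Tw p) = Tw (φ p))
    (hψ : ∀ v ∈ s, ψ (φ v) = v) :
    IsEquivariantIso φ (Submodule.span ℂ s) (Submodule.span ℂ (φ '' s)) := by
  refine ⟨(Submodule.span_image φ).symm, fun v hv hv0 => ?_, fun v _ => hS v, fun v _ => hT v⟩
  have hid : (ψ ∘ₗ φ) v = LinearMap.id v :=
    LinearMap.eqOn_span (f := ψ ∘ₗ φ) (g := LinearMap.id) hψ hv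
  simpa [hv0] using hid.symm

def phi02 : R6 →ₗ[ℂ] R6 := (2 : ℂ)⁻¹ • cyclicDiffOp 2 4 0 0

def psi02 : R6 →ₗ[ℂ] R6 := cyclicDiffOp 0 0 4 2

lemma phi02_X_sq (j : Fin 6) : phi02 (X j ^ 2) = X (j + 2) * X (j + 4) := by
  fin_cases j <;>
    simp [phi02, cyclicDiffOp_apply, Fin.sum_univ_six, sq, Pi.single_apply, ← two_smul ℂ, smul_smul]

lemma psi02_phi02_X_sq (j : Fin 6) : psi02 (phi02 (X j ^ 2)) = X j ^ 2 := by
  rw [phi02_X_sq]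
  fin_cases j <;> simp [psi02, cyclicDiffOp_apply, Fin.sum_univ_six, sq, Pi.single_apply]

lemma phi02_Sh (p : R6) : phi02 (Sh p) = Sh (phi02 p) := by
  simp [phi02, cyclicDiffOp_Sh]

lemma phi02_Tw (p : R6) : phi02 (Tw p) = Tw (phi02 p) := by
  simp [phi02, cyclicDiffOp_Tw (show (2 + 4 : Fin 6) = 0 + 0 from rfl)]

lemma phi02_V0p_generators :
    phi02 (X 0 ^ 2 + X 3 ^ 2) = X 2 * X 4 + X 5 * X 1 ∧
      phi02 (X 1 ^ 2 + X 4 ^ 2) = X 3 * X 5 + X 0 * X 2 ∧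
      phi02 (X 2 ^ 2 + X 5 ^ 2) = X 4 * X 0 + X 1 * X 3 := by
  simp [phi02_X_sq]

lemma phi02_V0m_generators :
    phi02 (X 0 ^ 2 - X 3 ^ 2) = X 2 * X 4 - X 5 * X 1 ∧
      phi02 (X 1 ^ 2 - X 4 ^ 2) = X 3 * X 5 - X 0 * X 2 ∧
      phi02 (X 2 ^ 2 - X 5 ^ 2) = X 4 * X 0 - X 1 * X 3 := by
  simp [phi02_X_sq]

lemma isEquivariantIso_phi02_V0p : IsEquivariantIso phi02 V0p V2p := by
  obtain ⟨h₀, h₁, h₂⟩ := phi02_V0p_generators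
  have hW : V2p = Submodule.span ℂ
      (phi02 '' {X 0 ^ 2 + X 3 ^ 2, X 1 ^ 2 + X 4 ^ 2, X 2 ^ 2 + X 5 ^ 2}) := by
    rw [V2p, Set.image_insert_eq, Set.image_insert_eq, Set.image_singleton, h₀, h₁, h₂]
    congr 1
    ext p
    simp only [Set.mem_insert_iff, Set.mem_singleton_iff]
    ring_nf
    tauto
  rw [hW]
  refine isEquivariantIso_span_image phi02_Sh phi02_Tw (ψ := psi02) ?_
  simp only [Set.mem_insert_iff, Set.mem_singleton_iff]
  rintro v (rfl | rfl | rfl) <;> simp only [map_add, psi02_phi02_X_sq]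

lemma isEquivariantIso_phi02_V0m : IsEquivariantIso phi02 V0m V2m := by
  obtain ⟨h₀, h₁, h₂⟩ := phi02_V0m_generators
  have hW : V2m = Submodule.span ℂ
      (phi02 '' {X 0 ^ 2 - X 3 ^ 2, X 1 ^ 2 - X 4 ^ 2, X 2 ^ 2 - X 5 ^ 2}) := by
    -- the image is `{h₂, -h₀, -h₁}` for the listed generators `h₀, h₁, h₂` of `V₂⁻`
    rw [V2m, Set.image_insert_eq, Set.image_insert_eq, Set.image_singleton, h₀, h₁, h₂,
      ← neg_sub (X 0 * X 2), ← neg_sub (X 1 * X 3), Set.insert_comm _ (-_),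
      Submodule.span_insert_neg, Set.pair_comm _ (-_), Set.insert_comm _ (-_),
      Submodule.span_insert_neg, Set.insert_comm (X 1 * X 3 - _)]
  rw [hW]
  refine isEquivariantIso_span_image phi02_Sh phi02_Tw (ψ := psi02) ?_
  simp only [Set.mem_insert_iff, Set.mem_singleton_iff]
  rintro v (rfl | rfl | rfl) <;> simp only [map_sub, psi02_phi02_X_sq]

def phi13 : R6 →ₗ[ℂ] R6 := (2 : ℂ)⁻¹ • cyclicDiffOp 2 5 1 0

def psi13 : R6 →ₗ[ℂ] R6 := cyclicDiffOp 0 1 5 2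

lemma phi13_Sh (p : R6) : phi13 (Sh p) = Sh (phi13 p) := by
  simp [phi13, cyclicDiffOp_Sh]

lemma phi13_Tw (p : R6) : phi13 (Tw p) = Tw (phi13 p) := by
  simp [phi13, cyclicDiffOp_Tw (show (2 + 5 : Fin 6) = 1 + 0 from rfl)]

lemma phi13_V1p_generators :
    phi13 (X 0 * X 1 + X 3 * X 4) = X 2 * X 5 ∧
      phi13 (X 1 * X 2 + X 4 * X 5) = X 3 * X 0 ∧
      phi13 (X 2 * X 3 + X 5 * X 0) = X 4 * X 1 := by
  simp [phi13, cyclicDiffOp_apply, Fin.sum_univ_six, Pi.single_apply, mul_comm, ← two_smul ℂ,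
    smul_smul]

lemma psi13_V3_generators :
    psi13 (X 2 * X 5) = X 0 * X 1 + X 3 * X 4 ∧
      psi13 (X 3 * X 0) = X 1 * X 2 + X 4 * X 5 ∧
      psi13 (X 4 * X 1) = X 2 * X 3 + X 5 * X 0 := by
  simp [psi13, cyclicDiffOp_apply, Fin.sum_univ_six, Pi.single_apply]

lemma isEquivariantIso_phi13_V1p : IsEquivariantIso phi13 V1p V3 := by
  obtain ⟨h₀, h₁, h₂⟩ := phi13_V1p_generators
  obtain ⟨k₀, k₁, k₂⟩ := psi13_V3_generators
  have hW : V3 = Submodule.span ℂ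
      (phi13 '' {X 0 * X 1 + X 3 * X 4, X 1 * X 2 + X 4 * X 5, X 2 * X 3 + X 5 * X 0}) := by
    rw [V3, Set.image_insert_eq, Set.image_insert_eq, Set.image_singleton, h₀, h₁, h₂]
    congr 1
    ext p
    simp only [Set.mem_insert_iff, Set.mem_singleton_iff]
    ring_nf
    tauto
  rw [hW]
  refine isEquivariantIso_span_image phi13_Sh phi13_Tw (ψ := psi13) ?_
  simp only [Set.mem_insert_iff, Set.mem_singleton_iff]
  rintro v (rfl | rfl | rfl)
  · rw [h₀, k₀]
  · rw [h₁, k₁]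
  · rw [h₂, k₂]

/-- There are `ℂ`-linear isomorphisms `V₀⁺ ≃ V₂⁺`, `V₀⁻ ≃ V₂⁻` and `V₁⁺ ≃ V₃`
intertwining the `S`- and `T`-actions and sending the generators as specified. -/
theorem equivariant_isomorphisms_between_paired_subspaces :
    (∃ φ : R6 →ₗ[ℂ] R6,
      φ (X 0 ^ 2 + X 3 ^ 2) = X 2 * X 4 + X 5 * X 1 ∧
      φ (X 1 ^ 2 + X 4 ^ 2) = X 3 * X 5 + X 0 * X 2 ∧
      φ (X 2 ^ 2 + X 5 ^ 2) = X 4 * X 0 + X 1 * X 3 ∧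
      IsEquivariantIso φ V0p V2p) ∧
    (∃ φ : R6 →ₗ[ℂ] R6,
      φ (X 0 ^ 2 - X 3 ^ 2) = X 2 * X 4 - X 5 * X 1 ∧
      φ (X 1 ^ 2 - X 4 ^ 2) = X 3 * X 5 - X 0 * X 2 ∧
      φ (X 2 ^ 2 - X 5 ^ 2) = X 4 * X 0 - X 1 * X 3 ∧
      IsEquivariantIso φ V0m V2m) ∧
    (∃ φ : R6 →ₗ[ℂ] R6,
      φ (X 0 * X 1 + X 3 * X 4) = X 2 * X 5 ∧
      φ (X 1 * X 2 + X 4 * X 5) = X 3 * X 0 ∧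
      φ (X 2 * X 3 + X 5 * X 0) = X 4 * X 1 ∧
      IsEquivariantIso φ V1p V3) := by
  obtain ⟨a₀, a₁, a₂⟩ := phi02_V0p_generators
  obtain ⟨b₀, b₁, b₂⟩ := phi02_V0m_generators
  obtain ⟨c₀, c₁, c₂⟩ := phi13_V1p_generators
  exact ⟨⟨phi02, a₀, a₁, a₂, isEquivariantIso_phi02_V0p⟩,
    ⟨phi02, b₀, b₁, b₂, isEquivariantIso_phi02_V0m⟩,
    ⟨phi13, c₀, c₁, c₂, isEquivariantIso_phi13_V1p⟩⟩
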